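/- arXiv:1412.5805 — 2 statements merged into one kernel-verified Lean document; each statement's English description precedes it below -/
import Mathlib

section
/- Let 0 ≤ s ≤ r and let α = (α_0,…,α_r) have all coordinates nonnegative with D_s(α) := ∑_{i=0}^{s} (C(s+1, i+1)/(s+1))·α_i < 1. For each n set p_i = n^{−α_i}. Then the P_r-probability that the random complex Y ∈ Y_r(n; n^{−α}) has dimension at least s (i.e. contains a face of cardinality s+1) tends to 1 as n → ∞. -/
open Finset Filter

/-- A subcomplex of the `r`-skeleton of the simplex on vertex set `Fin n`:
a collection of nonempty faces of cardinality at most `r+1`, closed under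
passing to nonempty subsets. -/
def IsComplex (n r : ℕ) (Y : Finset (Finset (Fin n))) : Prop :=
  (∀ σ ∈ Y, σ.Nonempty ∧ σ.card ≤ r + 1) ∧
    ∀ σ ∈ Y, ∀ τ ⊆ σ, τ.Nonempty → τ ∈ Y

/-- `fCount Y i` = number of faces of `Y` of cardinality `i+1` (i.e. of dimension `i`). -/
def fCount {n : ℕ} (Y : Finset (Finset (Fin n))) (i : ℕ) : ℕ :=
  (Y.filter fun σ => σ.card = i + 1).card

/-- `eCount Y i` = number of external `i`-faces of `Y`: sets `σ` of cardinality `i+1`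
that are not faces of `Y` but all of whose (nonempty) `i`-element subsets are faces of `Y`. -/
def eCount {n : ℕ} (Y : Finset (Finset (Fin n))) (i : ℕ) : ℕ :=
  ((univ : Finset (Finset (Fin n))).filter fun σ =>
    σ.card = i + 1 ∧ σ ∉ Y ∧ ∀ τ ⊆ σ, τ.card = i → τ.Nonempty → τ ∈ Y).card

/-- The weight `P_r(Y) = ∏_{i=0}^r p_i^{f_i(Y)} (1-p_i)^{e_i(Y)}`. -/
noncomputable def weight (n r : ℕ) (p : ℕ → ℝ) (Y : Finset (Finset (Fin n))) : ℝ :=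
  ∏ i ∈ Finset.range (r + 1), p i ^ fCount Y i * (1 - p i) ^ eCount Y i

open scoped Classical in
/-- The finite set of all subcomplexes of `Δ_n^{(r)}`. -/
noncomputable def complexes (n r : ℕ) : Finset (Finset (Finset (Fin n))) :=
  (univ : Finset (Finset (Finset (Fin n)))).filter (IsComplex n r)

/-- A finite abstract simplicial complex on a vertex type `V`. -/
def IsSimpComplex {V : Type*} [DecidableEq V] (S : Finset (Finset V)) : Prop :=
  S.Nonempty ∧ (∀ σ ∈ S, σ.Nonempty) ∧ ∀ σ ∈ S, ∀ τ ⊆ σ, τ.Nonempty → τ ∈ S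

/-- `fS S i` = number of faces of `S` of cardinality `i+1`. -/
def fS {V : Type*} [DecidableEq V] (S : Finset (Finset V)) (i : ℕ) : ℕ :=
  (S.filter fun σ => σ.card = i + 1).card

/-- The degree of a face `σ` in `S`: the number of faces of one higher dimension containing it. -/
def degFace {V : Type*} [DecidableEq V] (S : Finset (Finset V)) (σ : Finset V) : ℕ :=
  (S.filter fun τ => τ.card = σ.card + 1 ∧ σ ⊆ τ).card

namespace S16
open scoped Classical

variable {n : ℕ}

noncomputable def faces (n r : ℕ) : Finset (Finset (Fin n)) :=
  univ.filter fun σ => σ.Nonempty ∧ σ.card ≤ r + 1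

lemma mem_faces_iff {r : ℕ} {σ : Finset (Fin n)} :
    σ ∈ faces n r ↔ σ.Nonempty ∧ σ.card ≤ r + 1 := by simp [faces]

noncomputable def mu (n r : ℕ) (c : Finset (Fin n) → ℝ) (ω : Finset (Finset (Fin n))) : ℝ :=
  (∏ τ ∈ ω, c τ) * ∏ τ ∈ faces n r \ ω, (1 - c τ)

lemma mu_nonneg {r : ℕ} {c : Finset (Fin n) → ℝ} (hc0 : ∀ τ, 0 ≤ c τ)
    (hc1 : ∀ τ, c τ ≤ 1) (ω : Finset (Finset (Fin n))) : 0 ≤ mu n r c ω :=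
  mul_nonneg (prod_nonneg fun τ _ => hc0 τ)
    (prod_nonneg fun τ _ => by linarith [hc1 τ])

/-- marginalization -/
lemma sum_mu (r : ℕ) (c : Finset (Fin n) → ℝ) (S T : Finset (Finset (Fin n)))
    (hS : S ⊆ faces n r) (hT : T ⊆ faces n r) (hST : Disjoint S T) :
    ∑ ω ∈ (faces n r).powerset.filter (fun ω => S ⊆ ω ∧ Disjoint ω T), mu n r c ω
      = (∏ τ ∈ S, c τ) * ∏ τ ∈ T, (1 - c τ) := by
  set F := faces n r with hF
  set U := F \ (S ∪ T) with hU
  have hUS : Disjoint U S := (sdiff_disjoint).mono_right subset_union_left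
  have hUT : Disjoint U T := (sdiff_disjoint).mono_right subset_union_right
  have key : ∀ ω' ∈ U.powerset, mu n r c (ω' ∪ S)
      = ((∏ τ ∈ S, c τ) * ∏ τ ∈ T, (1 - c τ)) *
        ((∏ τ ∈ ω', c τ) * ∏ τ ∈ U \ ω', (1 - c τ)) := by
    intro ω' hω'
    rw [mem_powerset] at hω'
    have h1 : Disjoint ω' S := hUS.mono_left hω'
    have h2 : F \ (ω' ∪ S) = (U \ ω') ∪ T := by
      ext τ
      have h4 : τ ∈ T → τ ∈ F := fun h => hT h
      have h5 : τ ∈ T → τ ∉ S := fun h => disjoint_right.1 hST h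
      have h6 : τ ∈ T → τ ∉ ω' := fun h h' => disjoint_right.1 hUT h (hω' h')
      simp only [hU, Finset.mem_sdiff, Finset.mem_union]
      tauto
    have h3 : Disjoint (U \ ω') T := hUT.mono_left sdiff_subset
    rw [mu, prod_union h1, h2, prod_union h3]
    ring
  calc ∑ ω ∈ F.powerset.filter (fun ω => S ⊆ ω ∧ Disjoint ω T), mu n r c ω
      = ∑ ω' ∈ U.powerset, mu n r c (ω' ∪ S) := by
        refine (sum_nbij' (fun ω' => ω' ∪ S) (fun ω => ω \ S) ?_ ?_ ?_ ?_ ?_).symm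
        · intro ω' hω'
          rw [mem_powerset] at hω'
          simp only [mem_filter, mem_powerset]
          refine ⟨union_subset (hω'.trans sdiff_subset) hS, subset_union_right, ?_⟩
          rw [disjoint_left]
          intro a ha
          rcases mem_union.1 ha with h | h
          · exact fun haT => disjoint_right.1 hUT haT (hω' h)
          · exact fun haT => disjoint_left.1 hST h haT
        · intro ω hω
          simp only [mem_filter, mem_powerset] at hω
          rw [mem_powerset]
          intro a ha
          rw [Finset.mem_sdiff] at ha
          simp only [hU, Finset.mem_sdiff, Finset.mem_union]
          refine ⟨hω.1 ha.1, ?_⟩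
          rintro (h | h)
          exacts [ha.2 h, disjoint_left.1 hω.2.2 ha.1 h]
        · intro ω' hω'
          rw [mem_powerset] at hω'
          simpa using (hUS.mono_left hω').sup_sdiff_cancel_right
        · intro ω hω
          simp only [mem_filter, mem_powerset] at hω
          simpa using sdiff_union_of_subset hω.2.1
        · intro ω' hω'
          rfl
    _ = ((∏ τ ∈ S, c τ) * ∏ τ ∈ T, (1 - c τ)) *
        ∑ ω' ∈ U.powerset, (∏ τ ∈ ω', c τ) * ∏ τ ∈ U \ ω', (1 - c τ) := by
        rw [mul_sum]; exact sum_congr rfl key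
    _ = (∏ τ ∈ S, c τ) * ∏ τ ∈ T, (1 - c τ) := by
        rw [← prod_add]
        simp


noncomputable def gen (n r : ℕ) (ω : Finset (Finset (Fin n))) : Finset (Finset (Fin n)) :=
  (faces n r).filter fun σ => ∀ τ ⊆ σ, τ.Nonempty → τ ∈ ω

noncomputable def extF (n r : ℕ) (Y : Finset (Finset (Fin n))) : Finset (Finset (Fin n)) :=
  (faces n r).filter fun σ => σ ∉ Y ∧ ∀ τ ⊆ σ, τ.Nonempty → τ ≠ σ → τ ∈ Y

lemma complex_subset_faces {r : ℕ} {Y : Finset (Finset (Fin n))} (hY : IsComplex n r Y) :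
    Y ⊆ faces n r := fun σ hσ => mem_faces_iff.2 (hY.1 σ hσ)

lemma disj_ext {r : ℕ} (Y : Finset (Finset (Fin n))) : Disjoint Y (extF n r Y) :=
  disjoint_right.2 fun σ h => ((mem_filter.1 h).2).1

lemma isComplex_gen (r : ℕ) (ω : Finset (Finset (Fin n))) : IsComplex n r (gen n r ω) := by
  constructor
  · intro σ hσ
    exact mem_faces_iff.1 (mem_filter.1 hσ).1
  · intro σ hσ τ hτ hτne
    rcases mem_filter.1 hσ with ⟨hσF, hsub⟩
    refine mem_filter.2 ⟨mem_faces_iff.2 ⟨hτne, le_trans (card_le_card hτ) (mem_faces_iff.1 hσF).2⟩, ?_⟩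
    exact fun ρ hρ hρne => hsub ρ (hρ.trans hτ) hρne

lemma gen_eq_iff {r : ℕ} {Y ω : Finset (Finset (Fin n))} (hY : IsComplex n r Y) :
    gen n r ω = Y ↔ Y ⊆ ω ∧ Disjoint ω (extF n r Y) := by
  constructor
  · intro h
    subst h
    constructor
    · intro σ hσ
      rcases mem_filter.1 hσ with ⟨hσF, hsub⟩
      exact hsub σ (Finset.Subset.refl σ) (mem_faces_iff.1 hσF).1
    · rw [disjoint_right]
      intro τ hτext hτω
      rcases mem_filter.1 hτext with ⟨hτF, hτY, hsub⟩
      apply hτY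
      refine mem_filter.2 ⟨hτF, fun ρ hρ hρne => ?_⟩
      by_cases hρτ : ρ = τ
      · subst hρτ; exact hτω
      · have hρgen := hsub ρ hρ hρne hρτ
        exact (mem_filter.1 hρgen).2 ρ (Finset.Subset.refl ρ) hρne
  · rintro ⟨hYω, hdisj⟩
    apply Finset.Subset.antisymm
    · have key : ∀ m (σ : Finset (Fin n)), σ.card ≤ m → σ ∈ gen n r ω → σ ∈ Y := by
        intro m
        induction m with
        | zero =>
            intro σ hc hσ
            have hne := (mem_faces_iff.1 (mem_filter.1 hσ).1).1
            have := card_pos.2 hne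
            omega
        | succ m ih =>
            intro σ hc hσ
            by_contra hσY
            rcases mem_filter.1 hσ with ⟨hσF, hsub⟩
            have hext : σ ∈ extF n r Y := by
              refine mem_filter.2 ⟨hσF, hσY, fun τ hτσ hτne hτσ' => ?_⟩
              apply ih τ
              · have : τ.card < σ.card := card_lt_card (ssubset_of_subset_of_ne hτσ hτσ')
                omega
              · refine mem_filter.2 ⟨mem_faces_iff.2
                  ⟨hτne, le_trans (card_le_card hτσ) (mem_faces_iff.1 hσF).2⟩, ?_⟩
                exact fun ρ hρ hρne => hsub ρ (hρ.trans hτσ) hρne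
            exact disjoint_left.1 hdisj (hsub σ (Finset.Subset.refl σ) (mem_faces_iff.1 hσF).1) hext
      exact fun σ hσ => key σ.card σ le_rfl hσ
    · intro σ hσ
      refine mem_filter.2 ⟨complex_subset_faces hY hσ, fun τ hτ hτne => hYω (hY.2 σ hσ τ hτ hτne)⟩

lemma Y_fiber {r : ℕ} {Y : Finset (Finset (Fin n))} (hY : IsComplex n r Y) (i : ℕ) :
    (Y.filter (fun τ => τ.card - 1 = i)) = Y.filter (fun τ => τ.card = i + 1) := by
  apply filter_congr
  intro τ hτ
  have := card_pos.2 (hY.1 τ hτ).1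
  constructor <;> (intro h; omega)

lemma ext_fiber {r : ℕ} {Y : Finset (Finset (Fin n))} (hY : IsComplex n r Y) {i : ℕ}
    (hi : i ≤ r) :
    ((extF n r Y).filter (fun τ => τ.card - 1 = i)).card = eCount Y i := by
  rw [eCount]
  congr 1
  ext σ
  simp only [extF, faces, mem_filter, mem_univ, true_and, filter_filter]
  constructor
  · rintro ⟨⟨⟨hne, hcard⟩, hσY, hsub⟩, hc⟩
    have hpos := card_pos.2 hne
    have hc1 : σ.card = i + 1 := by omega
    refine ⟨hc1, hσY, fun τ hτ hτc hτne => ?_⟩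
    exact hsub τ hτ hτne (by intro h; subst h; omega)
  · rintro ⟨hc1, hσY, hsub⟩
    have hne : σ.Nonempty := card_pos.1 (by omega)
    refine ⟨⟨⟨hne, by omega⟩, hσY, ?_⟩, by omega⟩
    intro τ hτ hτne hτσ
    have hτpos := card_pos.2 hτne
    have hτlt : τ.card < σ.card := card_lt_card (ssubset_of_subset_of_ne hτ hτσ)
    obtain ⟨τ', hττ', hτ'σ, hτ'c⟩ := exists_subsuperset_card_eq hτ (by omega : τ.card ≤ i) (by omega)
    have hτ'ne : τ'.Nonempty := card_pos.1 (by omega)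
    exact hY.2 τ' (hsub τ' hτ'σ hτ'c hτ'ne) τ hττ' hτne

lemma weight_eq {r : ℕ} (p : ℕ → ℝ) {Y : Finset (Finset (Fin n))} (hY : IsComplex n r Y) :
    weight n r p Y = (∏ τ ∈ Y, p (τ.card - 1)) * ∏ τ ∈ extF n r Y, (1 - p (τ.card - 1)) := by
  have hmapsY : ∀ τ ∈ Y, τ.card - 1 ∈ Finset.range (r + 1) := by
    intro τ hτ
    have h := hY.1 τ hτ
    have := card_pos.2 h.1
    rw [mem_range]
    omega
  have hmapsE : ∀ τ ∈ extF n r Y, τ.card - 1 ∈ Finset.range (r + 1) := by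
    intro τ hτ
    rcases mem_filter.1 hτ with ⟨hτF, -⟩
    rcases mem_faces_iff.1 hτF with ⟨hne, hcard⟩
    have := card_pos.2 hne
    rw [mem_range]
    omega
  have h1 : ∏ τ ∈ Y, p (τ.card - 1) = ∏ i ∈ Finset.range (r + 1), p i ^ fCount Y i := by
    rw [← prod_fiberwise_of_maps_to hmapsY (fun τ => p (τ.card - 1))]
    refine prod_congr rfl fun i _ => ?_
    rw [Y_fiber hY i]
    rw [prod_congr rfl (fun τ hτ => by rw [(mem_filter.1 hτ).2]; norm_num : ∀ τ ∈ Y.filter (fun τ => τ.card = i + 1), p (τ.card - 1) = p i)]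
    rw [prod_const, fCount]
  have h2 : ∏ τ ∈ extF n r Y, (1 - p (τ.card - 1))
      = ∏ i ∈ Finset.range (r + 1), (1 - p i) ^ eCount Y i := by
    rw [← prod_fiberwise_of_maps_to hmapsE (fun τ => 1 - p (τ.card - 1))]
    refine prod_congr rfl fun i hi => ?_
    rw [prod_congr rfl (fun τ hτ => by rw [(mem_filter.1 hτ).2] : ∀ τ ∈ (extF n r Y).filter (fun τ => τ.card - 1 = i), (1 - p (τ.card - 1)) = (1 - p i))]
    rw [prod_const, ext_fiber hY (by rw [mem_range] at hi; omega : i ≤ r)]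
  rw [h1, h2, weight, ← prod_mul_distrib]

lemma sum_weight (r : ℕ) (p : ℕ → ℝ) (Q : Finset (Finset (Fin n)) → Prop) [DecidablePred Q] :
    ∑ Y ∈ (complexes n r).filter Q, weight n r p Y
      = ∑ ω ∈ (faces n r).powerset.filter (fun ω => Q (gen n r ω)),
          mu n r (fun τ => p (τ.card - 1)) ω := by
  rw [← sum_fiberwise_of_maps_to (g := gen n r) (t := (complexes n r).filter Q)
    (fun ω hω => by
      rw [mem_filter] at hω ⊢
      exact ⟨mem_filter.2 ⟨mem_univ _, isComplex_gen r ω⟩, hω.2⟩)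
    (mu n r (fun τ => p (τ.card - 1)))]
  refine sum_congr rfl fun Y hY => ?_
  rw [mem_filter] at hY
  have hYc : IsComplex n r Y := (mem_filter.1 hY.1).2
  have hfil : ((faces n r).powerset.filter (fun ω => Q (gen n r ω))).filter
        (fun ω => gen n r ω = Y)
      = (faces n r).powerset.filter (fun ω => Y ⊆ ω ∧ Disjoint ω (extF n r Y)) := by
    rw [filter_filter]
    apply filter_congr
    intro ω hω
    constructor
    · rintro ⟨hQ, hgen⟩
      exact (gen_eq_iff hYc).1 hgen
    · intro h
      have hg := (gen_eq_iff hYc).2 h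
      exact ⟨hg ▸ hY.2, hg⟩
  rw [hfil, sum_mu r _ Y (extF n r Y) (complex_subset_faces hYc) (filter_subset _ _)
    (disj_ext Y), ← weight_eq p hYc]








noncomputable def Bf (α : ℕ → ℝ) (m : ℕ) : ℝ :=
  ∑ i ∈ Finset.range m, (m.choose (i + 1) : ℝ) * α i

noncomputable def subs (σ : Finset (Fin n)) : Finset (Finset (Fin n)) :=
  σ.powerset.filter Finset.Nonempty

lemma subs_subset_faces {r : ℕ} {σ : Finset (Fin n)} (h : σ.card ≤ r + 1) :
    subs σ ⊆ faces n r := by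
  intro τ hτ
  rcases mem_filter.1 hτ with ⟨hp, hne⟩
  rw [mem_powerset] at hp
  exact mem_faces_iff.2 ⟨hne, le_trans (card_le_card hp) h⟩

lemma subs_inter (σ σ' : Finset (Fin n)) : subs σ ∩ subs σ' = subs (σ ∩ σ') := by
  ext τ
  simp only [subs, mem_inter, mem_filter, mem_powerset, subset_inter_iff]
  tauto

lemma rpow_sum {x : ℝ} (hx : 0 < x) {ι : Type*} (s : Finset ι) (f : ι → ℝ) :
    x ^ (∑ i ∈ s, f i) = ∏ i ∈ s, x ^ (f i) := by
  classical
  induction s using Finset.cons_induction with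
  | empty => simp
  | cons a s ha ih => rw [Finset.sum_cons, Finset.prod_cons, Real.rpow_add hx, ih]

lemma sum_subs (α : ℕ → ℝ) (σ : Finset (Fin n)) :
    ∑ τ ∈ subs σ, α (τ.card - 1) = Bf α σ.card := by
  classical
  set g : ℕ → ℝ := fun m => if m = 0 then 0 else α (m - 1) with hg
  have h1 : ∑ τ ∈ subs σ, α (τ.card - 1) = ∑ τ ∈ σ.powerset, g τ.card := by
    rw [subs, sum_filter]
    refine sum_congr rfl fun τ _ => ?_
    by_cases h : τ.Nonempty
    · rw [if_pos h]
      simp only [hg]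
      rw [if_neg (card_pos.2 h).ne']
    · rw [not_nonempty_iff_eq_empty] at h
      subst h
      simp [hg]
  rw [h1, sum_powerset_apply_card g, Finset.sum_range_succ']
  simp [Bf, hg]

lemma prod_subs (hn : 0 < n) (α : ℕ → ℝ) (σ : Finset (Fin n)) :
    ∏ τ ∈ subs σ, ((n : ℝ) ^ (-α (τ.card - 1))) = (n : ℝ) ^ (-(Bf α σ.card)) := by
  have hx : (0:ℝ) < n := by exact_mod_cast hn
  rw [← rpow_sum hx]
  congr 1
  rw [← sum_subs α σ, ← Finset.sum_neg_distrib]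

lemma count_bound {s k : ℕ} {σ : Finset (Fin n)} (hσc : σ.card = s + 1) :
    (((powersetCard (s+1) (univ : Finset (Fin n))).filter
        (fun σ' => (σ ∩ σ').card = k)).card : ℝ)
      ≤ (((s+1).choose k * n.choose (s+1-k) : ℕ) : ℝ) := by
  have h : ((powersetCard (s+1) (univ : Finset (Fin n))).filter
        (fun σ' => (σ ∩ σ').card = k)).card
      ≤ ((powersetCard k σ) ×ˢ (powersetCard (s+1-k) (univ : Finset (Fin n)))).card := by
    apply card_le_card_of_injOn (fun σ' => (σ ∩ σ', σ' \ σ))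
    · intro σ' hσ'
      rcases mem_filter.1 hσ' with ⟨hσ'1, hσ'2⟩
      rw [mem_powersetCard] at hσ'1
      simp only [Finset.mem_coe, Finset.mem_product, mem_powersetCard]
      refine ⟨⟨inter_subset_left, hσ'2⟩, subset_univ _, ?_⟩
      have h1 : (σ' \ σ).card + (σ' ∩ σ).card = σ'.card := card_sdiff_add_card_inter σ' σ
      rw [inter_comm] at h1
      have h2 := hσ'1.2
      omega
    · intro a ha b hb hab
      have ha' : a = (σ ∩ a) ∪ (a \ σ) := by
        ext t
        simp only [Finset.mem_union, Finset.mem_inter, Finset.mem_sdiff]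
        tauto
      have hb' : b = (σ ∩ b) ∪ (b \ σ) := by
        ext t
        simp only [Finset.mem_union, Finset.mem_inter, Finset.mem_sdiff]
        tauto
      rw [Prod.mk.injEq] at hab
      rw [ha', hb', hab.1, hab.2]
  have h2 : ((powersetCard k σ) ×ˢ (powersetCard (s+1-k) (univ : Finset (Fin n)))).card
      = (s+1).choose k * n.choose (s+1-k) := by
    rw [card_product, card_powersetCard, card_powersetCard, card_univ, Fintype.card_fin, hσc]
  rw [← h2]
  exact_mod_cast h

lemma sum_mu_subset {r : ℕ} (c : Finset (Fin n) → ℝ) {S : Finset (Finset (Fin n))}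
    (hS : S ⊆ faces n r) :
    ∑ ω ∈ (faces n r).powerset.filter (fun ω => S ⊆ ω), mu n r c ω = ∏ τ ∈ S, c τ := by
  have h := sum_mu r c S ∅ hS (empty_subset _) (disjoint_empty_right _)
  simp only [prod_empty, mul_one] at h
  rw [← h]
  refine sum_congr ?_ (fun _ _ => rfl)
  apply filter_congr
  intro ω _
  simp

lemma sum_mu_total (r : ℕ) (c : Finset (Fin n) → ℝ) :
    ∑ ω ∈ (faces n r).powerset, mu n r c ω = 1 := by
  have h := sum_mu_subset (r := r) c (empty_subset (faces n r))
  simp only [prod_empty] at h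
  rw [← h]
  congr 1
  rw [filter_true_of_mem]
  intro ω _
  exact empty_subset _

lemma upper_bound (r : ℕ) (c : Finset (Fin n) → ℝ) (hc0 : ∀ τ, 0 ≤ c τ) (hc1 : ∀ τ, c τ ≤ 1)
    (Q : Finset (Finset (Fin n)) → Prop) [DecidablePred Q] :
    ∑ ω ∈ (faces n r).powerset.filter Q, mu n r c ω ≤ 1 := by
  rw [← sum_mu_total r c]
  exact sum_le_sum_of_subset_of_nonneg (filter_subset _ _) (fun ω _ _ => mu_nonneg hc0 hc1 ω)

lemma event_iff {r s : ℕ} (hs : s ≤ r) (ω : Finset (Finset (Fin n))) :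
    (∃ σ ∈ gen n r ω, σ.card = s + 1)
      ↔ ∃ σ ∈ powersetCard (s+1) (univ : Finset (Fin n)), subs σ ⊆ ω := by
  constructor
  · rintro ⟨σ, hσ, hc⟩
    refine ⟨σ, mem_powersetCard.2 ⟨subset_univ _, hc⟩, ?_⟩
    intro τ hτ
    rcases mem_filter.1 hτ with ⟨hp, hne⟩
    rw [mem_powerset] at hp
    exact (mem_filter.1 hσ).2 τ hp hne
  · rintro ⟨σ, hσ, hsub⟩
    rw [mem_powersetCard] at hσ
    refine ⟨σ, mem_filter.2 ⟨mem_faces_iff.2 ⟨card_pos.1 (by omega), by omega⟩, ?_⟩, hσ.2⟩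
    intro τ hτ hτne
    exact hsub (mem_filter.2 ⟨mem_powerset.2 hτ, hτne⟩)

set_option maxHeartbeats 2000000 in
lemma lower_bound {r s : ℕ} (hs : s ≤ r) (α : ℕ → ℝ) (hα : ∀ i, 0 ≤ α i)
    (hn : s + 1 ≤ n) :
    1 - (∑ k ∈ Finset.Ico 1 (s + 2),
          (((s+1).choose k * n.choose (s+1-k) : ℕ) : ℝ) * (n:ℝ) ^ (Bf α k))
        / (n.choose (s+1) : ℝ)
      ≤ ∑ ω ∈ (faces n r).powerset.filter
          (fun ω => ∃ σ ∈ powersetCard (s+1) (univ : Finset (Fin n)), subs σ ⊆ ω),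
          mu n r (fun τ => (n:ℝ) ^ (-α (τ.card - 1))) ω := by
  classical
  have hn0 : 0 < n := by omega
  have hx0 : (0:ℝ) < (n:ℝ) := by exact_mod_cast hn0
  set c : Finset (Fin n) → ℝ := fun τ => (n:ℝ) ^ (-α (τ.card - 1)) with hcdef
  have hc0 : ∀ τ, 0 ≤ c τ := fun τ => (Real.rpow_pos_of_pos hx0 _).le
  have hc1 : ∀ τ, c τ ≤ 1 := fun τ =>
    Real.rpow_le_one_of_one_le_of_nonpos (by exact_mod_cast hn0) (neg_nonpos.2 (hα _))
  set Sn := powersetCard (s+1) (univ : Finset (Fin n)) with hSn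
  set P := (faces n r).powerset with hP
  set A := Bf α (s+1) with hA
  set x := (n:ℝ) ^ (-A) with hx
  have hxpos : 0 < x := Real.rpow_pos_of_pos hx0 _
  set M := ((n.choose (s+1) : ℕ) : ℝ) with hM
  have hMpos : (0:ℝ) < M := by
    rw [hM]
    exact_mod_cast Nat.choose_pos hn
  have hcard : (Sn.card : ℝ) = M := by
    rw [hSn, card_powersetCard, card_univ, Fintype.card_fin, hM]
  have hsubF : ∀ σ ∈ Sn, subs σ ⊆ faces n r := by
    intro σ hσ
    rw [hSn, mem_powersetCard] at hσ
    exact subs_subset_faces (by omega)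
  have hσcard : ∀ σ ∈ Sn, σ.card = s + 1 := by
    intro σ hσ
    rw [hSn, mem_powersetCard] at hσ
    exact hσ.2
  have hprodσ : ∀ σ ∈ Sn, ∏ τ ∈ subs σ, c τ = x := by
    intro σ hσ
    rw [hcdef, prod_subs hn0, hσcard σ hσ, ← hA, ← hx]
  have hEind : ∀ (S : Finset (Finset (Fin n))), S ⊆ faces n r →
      ∑ ω ∈ P, mu n r c ω * (if S ⊆ ω then (1:ℝ) else 0) = ∏ τ ∈ S, c τ := by
    intro S hS
    rw [← sum_mu_subset c hS, sum_filter]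
    exact sum_congr rfl fun ω _ => by rw [mul_ite, mul_one, mul_zero]
  have hE : ∑ ω ∈ P, mu n r c ω * (∑ σ ∈ Sn, if subs σ ⊆ ω then (1:ℝ) else 0) = M * x := by
    calc ∑ ω ∈ P, mu n r c ω * (∑ σ ∈ Sn, if subs σ ⊆ ω then (1:ℝ) else 0)
        = ∑ ω ∈ P, ∑ σ ∈ Sn, mu n r c ω * (if subs σ ⊆ ω then (1:ℝ) else 0) := by
          exact sum_congr rfl fun ω _ => mul_sum _ _ _
      _ = ∑ σ ∈ Sn, ∑ ω ∈ P, mu n r c ω * (if subs σ ⊆ ω then (1:ℝ) else 0) := sum_comm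
      _ = ∑ σ ∈ Sn, x := by
          refine sum_congr rfl fun σ hσ => ?_
          rw [hEind (subs σ) (hsubF σ hσ)]
          exact hprodσ σ hσ
      _ = M * x := by rw [sum_const, nsmul_eq_mul, hcard]
  have hCS : (∑ ω ∈ P, mu n r c ω * (∑ σ ∈ Sn, if subs σ ⊆ ω then (1:ℝ) else 0)) ^ 2
      ≤ (∑ ω ∈ P, mu n r c ω * (if (∃ σ ∈ Sn, subs σ ⊆ ω) then (1:ℝ) else 0))
        * (∑ ω ∈ P, mu n r c ω * (∑ σ ∈ Sn, if subs σ ⊆ ω then (1:ℝ) else 0) ^ 2) := by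
    apply sum_sq_le_sum_mul_sum_of_sq_eq_mul
    · intro ω _
      refine mul_nonneg (mu_nonneg hc0 hc1 ω) ?_
      split_ifs <;> norm_num
    · intro ω _
      exact mul_nonneg (mu_nonneg hc0 hc1 ω) (sq_nonneg _)
    · intro ω _
      by_cases h : ∃ σ ∈ Sn, subs σ ⊆ ω
      · rw [if_pos h]; ring
      · have hz : (∑ σ ∈ Sn, if subs σ ⊆ ω then (1:ℝ) else 0) = 0 :=
          sum_eq_zero fun σ hσ => if_neg (fun hsub => h ⟨σ, hσ, hsub⟩)
        rw [if_neg h, hz]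
        ring
  have hEN2 : ∑ ω ∈ P, mu n r c ω * (∑ σ ∈ Sn, if subs σ ⊆ ω then (1:ℝ) else 0) ^ 2
      = ∑ σ ∈ Sn, ∑ σ' ∈ Sn, ∏ τ ∈ subs σ ∪ subs σ', c τ := by
    calc ∑ ω ∈ P, mu n r c ω * (∑ σ ∈ Sn, if subs σ ⊆ ω then (1:ℝ) else 0) ^ 2
        = ∑ ω ∈ P, ∑ σ ∈ Sn, ∑ σ' ∈ Sn,
            mu n r c ω * (if subs σ ∪ subs σ' ⊆ ω then (1:ℝ) else 0) := by
          refine sum_congr rfl fun ω _ => ?_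
          rw [sq, sum_mul_sum, mul_sum]
          refine sum_congr rfl fun σ _ => ?_
          rw [mul_sum]
          refine sum_congr rfl fun σ' _ => ?_
          by_cases h1 : subs σ ⊆ ω <;> by_cases h2 : subs σ' ⊆ ω <;>
            simp [h1, h2, union_subset_iff]
      _ = ∑ σ ∈ Sn, ∑ σ' ∈ Sn, ∑ ω ∈ P,
            mu n r c ω * (if subs σ ∪ subs σ' ⊆ ω then (1:ℝ) else 0) := by
          rw [sum_comm]
          exact sum_congr rfl fun σ _ => sum_comm
      _ = ∑ σ ∈ Sn, ∑ σ' ∈ Sn, ∏ τ ∈ subs σ ∪ subs σ', c τ := by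
          refine sum_congr rfl fun σ hσ => sum_congr rfl fun σ' hσ' => ?_
          exact hEind _ (union_subset (hsubF σ hσ) (hsubF σ' hσ'))
  have hprod_union : ∀ σ ∈ Sn, ∀ σ' ∈ Sn,
      ∏ τ ∈ subs σ ∪ subs σ', c τ = (n:ℝ) ^ (Bf α ((σ ∩ σ').card)) * (x * x) := by
    intro σ hσ σ' hσ'
    have h := prod_union_inter (s₁ := subs σ) (s₂ := subs σ') (f := c)
    rw [subs_inter, hprodσ σ hσ, hprodσ σ' hσ'] at h
    have hint : ∏ τ ∈ subs (σ ∩ σ'), c τ = (n:ℝ) ^ (-(Bf α ((σ ∩ σ').card))) := by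
      rw [hcdef]
      exact prod_subs hn0 α _
    rw [hint] at h
    have hne : ((n:ℝ) ^ (-(Bf α ((σ ∩ σ').card)))) ≠ 0 := (Real.rpow_pos_of_pos hx0 _).ne'
    have heq : ∏ τ ∈ subs σ ∪ subs σ', c τ
        = (x * x) / ((n:ℝ) ^ (-(Bf α ((σ ∩ σ').card)))) := eq_div_of_mul_eq hne h
    rw [heq, Real.rpow_neg hx0.le, div_eq_mul_inv, inv_inv]
    ring
  have hgroup : ∀ σ ∈ Sn,
      ∑ σ' ∈ Sn, (n:ℝ) ^ (Bf α ((σ ∩ σ').card)) * (x * x)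
        ≤ ∑ k ∈ Finset.range (s+2), (((s+1).choose k * n.choose (s+1-k) : ℕ) : ℝ)
            * ((n:ℝ) ^ (Bf α k) * (x * x)) := by
    intro σ hσ
    have hmaps : ∀ σ' ∈ Sn, (σ ∩ σ').card ∈ Finset.range (s+2) := by
      intro σ' hσ'
      rw [mem_range]
      have h1 : (σ ∩ σ').card ≤ σ.card := card_le_card inter_subset_left
      have h2 := hσcard σ hσ
      omega
    rw [← sum_fiberwise_of_maps_to hmaps (fun σ' => (n:ℝ) ^ (Bf α ((σ ∩ σ').card)) * (x * x))]
    apply sum_le_sum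
    intro k _
    have heq : ∑ σ' ∈ Sn.filter (fun σ' => (σ ∩ σ').card = k),
        (n:ℝ) ^ (Bf α ((σ ∩ σ').card)) * (x * x)
        = (Sn.filter (fun σ' => (σ ∩ σ').card = k)).card • ((n:ℝ) ^ (Bf α k) * (x * x)) := by
      rw [sum_congr rfl (fun σ' hσ' => by rw [(mem_filter.1 hσ').2])]
      exact sum_const _
    rw [heq, nsmul_eq_mul]
    apply mul_le_mul_of_nonneg_right
    · rw [hSn]
      exact count_bound (hσcard σ hσ)
    · exact mul_nonneg (Real.rpow_nonneg hx0.le _) (mul_nonneg hxpos.le hxpos.le)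
  set W := ∑ k ∈ Finset.Ico 1 (s + 2),
      (((s+1).choose k * n.choose (s+1-k) : ℕ) : ℝ) * (n:ℝ) ^ (Bf α k) with hW
  have hWnn : 0 ≤ W := by
    rw [hW]
    exact sum_nonneg fun k _ => mul_nonneg (by positivity) (Real.rpow_nonneg hx0.le _)
  have hsplit : ∑ k ∈ Finset.range (s+2), (((s+1).choose k * n.choose (s+1-k) : ℕ) : ℝ)
          * ((n:ℝ) ^ (Bf α k) * (x * x)) = (M + W) * (x * x) := by
    rw [range_eq_Ico, sum_eq_sum_Ico_succ_bot (by omega : 0 < s+2)]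
    have h0 : (((s+1).choose 0 * n.choose (s+1-0) : ℕ) : ℝ)
        * ((n:ℝ) ^ (Bf α 0) * (x * x)) = M * (x*x) := by
      simp [Bf, hM]
    rw [h0, hW, add_mul, sum_mul]
    congr 1
    exact sum_congr rfl fun k _ => by ring
  set Pev := ∑ ω ∈ P.filter (fun ω => ∃ σ ∈ Sn, subs σ ⊆ ω), mu n r c ω with hPev
  have hPevnn : 0 ≤ Pev := by
    rw [hPev]
    exact sum_nonneg fun ω _ => mu_nonneg hc0 hc1 ω
  have hPevEq : ∑ ω ∈ P, mu n r c ω * (if (∃ σ ∈ Sn, subs σ ⊆ ω) then (1:ℝ) else 0) = Pev := by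
    rw [hPev, sum_filter]
    exact sum_congr rfl fun ω _ => by rw [mul_ite, mul_one, mul_zero]
  have hkey : M * M * (x * x) ≤ Pev * ((M + W) * (x * x)) * M := by
    have e1 : (M * x) ^ 2 = M * M * (x * x) := by ring
    have c1 : M * M * (x * x) ≤ Pev *
        (∑ ω ∈ P, mu n r c ω * (∑ σ ∈ Sn, if subs σ ⊆ ω then (1:ℝ) else 0) ^ 2) := by
      rw [← e1, ← hE, ← hPevEq]
      exact hCS
    have c2 : (∑ ω ∈ P, mu n r c ω * (∑ σ ∈ Sn, if subs σ ⊆ ω then (1:ℝ) else 0) ^ 2)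
        ≤ M * ((M + W) * (x * x)) := by
      rw [hEN2]
      calc ∑ σ ∈ Sn, ∑ σ' ∈ Sn, ∏ τ ∈ subs σ ∪ subs σ', c τ
          = ∑ σ ∈ Sn, ∑ σ' ∈ Sn, (n:ℝ) ^ (Bf α ((σ ∩ σ').card)) * (x * x) :=
            sum_congr rfl fun σ hσ => sum_congr rfl fun σ' hσ' => hprod_union σ hσ σ' hσ'
        _ ≤ ∑ σ ∈ Sn, ∑ k ∈ Finset.range (s+2), (((s+1).choose k * n.choose (s+1-k) : ℕ) : ℝ)
              * ((n:ℝ) ^ (Bf α k) * (x * x)) := sum_le_sum hgroup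
        _ = M * ((M + W) * (x * x)) := by rw [sum_const, nsmul_eq_mul, hcard, hsplit]
    calc M * M * (x * x) ≤ Pev * (M * ((M + W) * (x * x))) :=
          le_trans c1 (mul_le_mul_of_nonneg_left c2 hPevnn)
      _ = Pev * ((M + W) * (x * x)) * M := by ring
  have hMle : M ≤ Pev * (M + W) := by
    have hxx : 0 < x * x := mul_pos hxpos hxpos
    have h1 : M * (M * (x * x)) ≤ (Pev * (M + W)) * (M * (x * x)) := by
      calc M * (M * (x * x)) = M * M * (x * x) := by ring
        _ ≤ Pev * ((M + W) * (x * x)) * M := hkey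
        _ = (Pev * (M + W)) * (M * (x * x)) := by ring
    exact le_of_mul_le_mul_right (by linarith [h1]) (mul_pos hMpos hxx)
  have h1 : M / (M + W) ≤ Pev := by
    rw [div_le_iff₀ (by linarith : (0:ℝ) < M + W)]
    linarith
  have h2 : 1 - W / M ≤ M / (M + W) := by
    rw [le_div_iff₀ (by linarith : (0:ℝ) < M + W)]
    have e : (1 - W / M) * (M + W) = M - W^2 / M := by
      field_simp
      ring
    rw [e]
    have : 0 ≤ W^2 / M := div_nonneg (sq_nonneg _) hMpos.le
    linarith
  exact le_trans h2 (le_of_le_of_eq h1 (by rw [hPev, hP, hSn, hcdef]; exact Finset.sum_congr (by ext ω; simp only [mem_filter]) fun _ _ => rfl))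
lemma choose_ineq (s i : ℕ) : ∀ k, k ≤ s + 1 → (s + 1) * k.choose (i + 1) ≤ k * (s + 1).choose (i + 1)
  | 0, _ => by simp
  | (k+1), hk => by
      have h1 : (k+1) * k.choose i = (k+1).choose (i+1) * (i+1) := by
        simpa using Nat.add_one_mul_choose_eq k i
      have h2 : (s+1) * s.choose i = (s+1).choose (i+1) * (i+1) := by
        simpa using Nat.add_one_mul_choose_eq s i
      have h3 : k.choose i ≤ s.choose i := Nat.choose_le_choose i (by omega)
      apply Nat.le_of_mul_le_mul_right _ (Nat.succ_pos i)
      calc (s+1) * (k+1).choose (i+1) * (i+1) = (s+1) * ((k+1).choose (i+1) * (i+1)) := by ring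
        _ = (s+1) * ((k+1) * k.choose i) := by rw [← h1]
        _ ≤ (s+1) * ((k+1) * s.choose i) :=
            Nat.mul_le_mul_left _ (Nat.mul_le_mul_left _ h3)
        _ = (k+1) * ((s+1) * s.choose i) := by ring
        _ = (k+1) * ((s+1).choose (i+1) * (i+1)) := by rw [h2]
        _ = (k+1) * (s+1).choose (i+1) * (i+1) := by ring

lemma Bf_lt {s : ℕ} {α : ℕ → ℝ} (hα : ∀ i, 0 ≤ α i)
    (hD : ∑ i ∈ Finset.range (s + 1), ((s + 1).choose (i + 1) : ℝ) / (s + 1) * α i < 1)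
    {k : ℕ} (hk1 : 1 ≤ k) (hk2 : k ≤ s + 1) : Bf α k < k := by
  have hs1 : (0:ℝ) < (s:ℝ) + 1 := by positivity
  have h1 : Bf α k ≤ ∑ i ∈ Finset.range k, (k:ℝ) * (((s+1).choose (i+1) : ℝ) / (s+1) * α i) := by
    apply sum_le_sum
    intro i _
    have hc := choose_ineq s i k hk2
    have hcr : ((s:ℝ)+1) * (k.choose (i+1):ℝ) ≤ (k:ℝ) * ((s+1).choose (i+1):ℝ) := by
      exact_mod_cast hc
    have hh : (k.choose (i+1):ℝ) ≤ (k:ℝ) * ((s+1).choose (i+1):ℝ) / ((s:ℝ)+1) := by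
      rw [le_div_iff₀ hs1]
      linarith
    calc (k.choose (i+1):ℝ) * α i
        ≤ ((k:ℝ) * ((s+1).choose (i+1):ℝ) / ((s:ℝ)+1)) * α i :=
          mul_le_mul_of_nonneg_right hh (hα i)
      _ = (k:ℝ) * (((s+1).choose (i+1) : ℝ) / ((s:ℝ)+1) * α i) := by ring
  have h2 : ∑ i ∈ Finset.range k, (((s+1).choose (i+1) : ℝ) / ((s:ℝ)+1) * α i)
      ≤ ∑ i ∈ Finset.range (s+1), (((s+1).choose (i+1) : ℝ) / ((s:ℝ)+1) * α i) :=
    sum_le_sum_of_subset_of_nonneg (range_subset_range.2 hk2)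
      (fun i _ _ => mul_nonneg (by positivity) (hα i))
  have hk0 : (0:ℝ) < (k:ℝ) := by exact_mod_cast hk1
  calc Bf α k ≤ (k:ℝ) * ∑ i ∈ Finset.range k, (((s+1).choose (i+1) : ℝ) / ((s:ℝ)+1) * α i) := by
        rw [mul_sum]
        exact h1
    _ ≤ (k:ℝ) * ∑ i ∈ Finset.range (s+1), (((s+1).choose (i+1) : ℝ) / ((s:ℝ)+1) * α i) :=
        mul_le_mul_of_nonneg_left h2 hk0.le
    _ < (k:ℝ) * 1 := by
        apply mul_lt_mul_of_pos_left ?_ hk0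
        convert hD using 2
    _ = (k:ℝ) := mul_one _

lemma term_tendsto (s k : ℕ) (hk2 : k ≤ s + 1) {α : ℕ → ℝ}
    (hB : Bf α k < k) :
    Tendsto (fun n : ℕ => ((n.choose (s+1-k) : ℕ) : ℝ) * (n:ℝ) ^ (Bf α k)
      / ((n.choose (s+1) : ℕ) : ℝ)) atTop (nhds 0) := by
  set β : ℝ := ((s+1-k : ℕ) : ℝ) + Bf α k with hβ
  have hβlt : β < (s:ℝ) + 1 := by
    rw [hβ, Nat.cast_sub hk2]
    push_cast
    have : (k:ℝ) ≥ 1 ∨ True := Or.inr trivial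
    have hkr : Bf α k < (k:ℝ) := hB
    linarith
  -- the dominating function
  set g : ℕ → ℝ := fun n => (((s+1).factorial : ℕ) : ℝ) *
      ((n:ℝ) ^ (β - ((s:ℝ)+1)) * ((n:ℝ) / ((n:ℝ) - (s:ℝ))) ^ (s+1)) with hg
  have t1 : Tendsto (fun n : ℕ => (n:ℝ) ^ (β - ((s:ℝ)+1))) atTop (nhds 0) := by
    have h := (tendsto_rpow_neg_atTop (show (0:ℝ) < ((s:ℝ)+1) - β by linarith)).comp
      tendsto_natCast_atTop_atTop
    refine h.congr fun n => ?_
    simp only [Function.comp]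
    rw [neg_sub]
  have hsub : Tendsto (fun n : ℕ => (n:ℝ) - (s:ℝ)) atTop atTop := by
    simpa [sub_eq_add_neg] using
      tendsto_atTop_add_const_right atTop (-(s:ℝ)) tendsto_natCast_atTop_atTop
  have t2 : Tendsto (fun n : ℕ => (n:ℝ) / ((n:ℝ) - (s:ℝ))) atTop (nhds 1) := by
    have h1 : Tendsto (fun n : ℕ => 1 + (s:ℝ) / ((n:ℝ) - (s:ℝ))) atTop (nhds 1) := by
      have := (tendsto_const_nhds (x := (s:ℝ)) (f := atTop (α := ℕ))).div_atTop hsub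
      simpa using (tendsto_const_nhds (x := (1:ℝ)) (f := atTop (α := ℕ))).add this
    refine Tendsto.congr' ?_ h1
    filter_upwards [eventually_ge_atTop (s+1)] with n hn
    have hpos : (0:ℝ) < (n:ℝ) - (s:ℝ) := by
      have : (s:ℝ) + 1 ≤ (n:ℝ) := by exact_mod_cast hn
      linarith
    field_simp
    ring
  have t3 : Tendsto (fun n : ℕ => ((n:ℝ) / ((n:ℝ) - (s:ℝ))) ^ (s+1)) atTop (nhds 1) := by
    simpa using t2.pow (s+1)
  have tg : Tendsto g atTop (nhds 0) := by
    rw [hg]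
    simpa using (tendsto_const_nhds (x := (((s+1).factorial : ℕ) : ℝ))
      (f := atTop (α := ℕ))).mul (t1.mul t3)
  apply squeeze_zero' (g := g)
  · filter_upwards [eventually_ge_atTop 1] with n hn
    have : (0:ℝ) ≤ (n:ℝ) := Nat.cast_nonneg n
    positivity
  · filter_upwards [eventually_ge_atTop (s+1)] with n hn
    have hn0 : (0:ℝ) < (n:ℝ) := by
      have : (1:ℕ) ≤ n := by omega
      exact_mod_cast Nat.lt_of_lt_of_le Nat.zero_lt_one this
    have hns : (0:ℝ) < (n:ℝ) - (s:ℝ) := by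
      have : (s:ℝ) + 1 ≤ (n:ℝ) := by exact_mod_cast hn
      linarith
    have hfac : (0:ℝ) < (((s+1).factorial : ℕ) : ℝ) := by
      exact_mod_cast (s+1).factorial_pos
    -- lower bound for the denominator
    have hden : ((n:ℝ) - (s:ℝ)) ^ (s+1) / (((s+1).factorial : ℕ) : ℝ)
        ≤ ((n.choose (s+1) : ℕ) : ℝ) := by
      have h := Nat.pow_le_choose (α := ℝ) (s+1) n
      have hcast : ((n + 1 - (s+1) : ℕ) : ℝ) = (n:ℝ) - (s:ℝ) := by
        have : n + 1 - (s+1) = n - s := by omega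
        rw [this, Nat.cast_sub (by omega : s ≤ n)]
      rw [hcast] at h
      convert h using 2
    have hdenpos : (0:ℝ) < ((n:ℝ) - (s:ℝ)) ^ (s+1) / (((s+1).factorial : ℕ) : ℝ) := by
      positivity
    -- upper bound for the numerator
    have hnum : ((n.choose (s+1-k) : ℕ) : ℝ) * (n:ℝ) ^ (Bf α k)
        ≤ (n:ℝ) ^ (s+1-k : ℕ) * (n:ℝ) ^ (Bf α k) := by
      apply mul_le_mul_of_nonneg_right _ (Real.rpow_nonneg hn0.le _)
      exact_mod_cast Nat.choose_le_pow n (s+1-k)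
    have hstep : ((n.choose (s+1-k) : ℕ) : ℝ) * (n:ℝ) ^ (Bf α k) / ((n.choose (s+1) : ℕ) : ℝ)
        ≤ ((n:ℝ) ^ (s+1-k : ℕ) * (n:ℝ) ^ (Bf α k))
          / (((n:ℝ) - (s:ℝ)) ^ (s+1) / (((s+1).factorial : ℕ) : ℝ)) :=
      div_le_div₀ (by positivity) hnum hdenpos hden
    refine le_trans hstep (le_of_eq ?_)
    have hb1 : (n:ℝ) ^ (s+1-k : ℕ) * (n:ℝ) ^ (Bf α k)
        = (n:ℝ) ^ (β - ((s:ℝ)+1)) * (n:ℝ) ^ ((s+1 : ℕ)) := by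
      rw [← Real.rpow_natCast (n:ℝ) (s+1-k), ← Real.rpow_natCast (n:ℝ) (s+1),
        ← Real.rpow_add hn0, ← Real.rpow_add hn0]
      congr 1
      rw [hβ]
      push_cast
      ring
    rw [hb1, hg]
    have hne1 : ((n:ℝ) - (s:ℝ)) ^ (s+1) ≠ 0 := by positivity
    have hne2 : (n:ℝ) - (s:ℝ) ≠ 0 := hns.ne'
    beta_reduce
    rw [div_pow]
    generalize ((n:ℝ) - (s:ℝ)) ^ (s+1) = d
    rw [div_div_eq_mul_div]
    ring
  · exact tg
end S16

open scoped Classical in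
/-- if `D_s(α) < 1` then a.a.s. the random complex `Y ∈ Y_r(n; n^{-α})`
has dimension at least `s`. -/
theorem stmt16 (r s : ℕ) (hs : s ≤ r) (α : ℕ → ℝ) (hα : ∀ i, 0 ≤ α i)
    (hD : ∑ i ∈ Finset.range (s + 1),
        ((s + 1).choose (i + 1) : ℝ) / (s + 1) * α i < 1) :
    Tendsto (fun n : ℕ =>
      ∑ Y ∈ (complexes n r).filter (fun Y => ∃ σ ∈ Y, σ.card = s + 1),
        weight n r (fun i => (n : ℝ) ^ (-α i)) Y)
      atTop (nhds 1) := by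
  classical
  have hQ : ∀ n : ℕ,
      (∑ Y ∈ (complexes n r).filter (fun Y => ∃ σ ∈ Y, σ.card = s + 1),
        weight n r (fun i => (n : ℝ) ^ (-α i)) Y)
      = ∑ ω ∈ (S16.faces n r).powerset.filter
          (fun ω => ∃ σ ∈ powersetCard (s+1) (univ : Finset (Fin n)), S16.subs σ ⊆ ω),
          S16.mu n r (fun τ => (n:ℝ) ^ (-α (τ.card - 1))) ω := by
    intro n
    rw [S16.sum_weight r (fun i => (n:ℝ)^(-α i)) (fun Y => ∃ σ ∈ Y, σ.card = s + 1)]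
    refine sum_congr ?_ (fun _ _ => rfl)
    ext ω
    simp only [mem_filter]
    exact and_congr_right fun _ => S16.event_iff hs ω
  have hRt : Tendsto (fun n : ℕ => (∑ k ∈ Finset.Ico 1 (s + 2),
      (((s+1).choose k * n.choose (s+1-k) : ℕ) : ℝ) * (n:ℝ) ^ (S16.Bf α k))
      / ((n.choose (s+1) : ℕ) : ℝ)) atTop (nhds 0) := by
    have heq : ∀ n : ℕ, (∑ k ∈ Finset.Ico 1 (s + 2),
        (((s+1).choose k * n.choose (s+1-k) : ℕ) : ℝ) * (n:ℝ) ^ (S16.Bf α k))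
        / ((n.choose (s+1) : ℕ) : ℝ)
        = ∑ k ∈ Finset.Ico 1 (s + 2), (((s+1).choose k : ℕ) : ℝ) *
            (((n.choose (s+1-k) : ℕ) : ℝ) * (n:ℝ) ^ (S16.Bf α k)
              / ((n.choose (s+1) : ℕ) : ℝ)) := by
      intro n
      rw [Finset.sum_div]
      refine sum_congr rfl fun k _ => ?_
      push_cast
      ring
    simp only [heq]
    have h := tendsto_finset_sum (Finset.Ico 1 (s+2)) (f := fun (k : ℕ) (n : ℕ) =>
        (((s+1).choose k : ℕ) : ℝ) * (((n.choose (s+1-k) : ℕ) : ℝ) * (n:ℝ) ^ (S16.Bf α k)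
          / ((n.choose (s+1) : ℕ) : ℝ))) (fun k hk => by
      rw [Finset.mem_Ico] at hk
      have hB := S16.Bf_lt hα hD hk.1 (by omega : k ≤ s + 1)
      exact (tendsto_const_nhds (x := (((s+1).choose k : ℕ):ℝ))).mul
        (S16.term_tendsto s k (by omega) hB))
    simpa using h
  refine tendsto_of_tendsto_of_tendsto_of_le_of_le'
    (g := fun n : ℕ => 1 - (∑ k ∈ Finset.Ico 1 (s + 2),
      (((s+1).choose k * n.choose (s+1-k) : ℕ) : ℝ) * (n:ℝ) ^ (S16.Bf α k))
      / ((n.choose (s+1) : ℕ) : ℝ)) (h := fun _ => (1:ℝ)) ?_ ?_ ?_ ?_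
  · simpa using (tendsto_const_nhds (x := (1:ℝ)) (f := atTop (α := ℕ))).sub hRt
  · exact tendsto_const_nhds
  · filter_upwards [eventually_ge_atTop (s+1)] with n hn
    rw [hQ n]
    exact S16.lower_bound hs α hα hn
  · filter_upwards [eventually_ge_atTop 1] with n hn
    rw [hQ n]
    exact @S16.upper_bound n r _ (fun τ => Real.rpow_nonneg (Nat.cast_nonneg n) _)
      (fun τ => Real.rpow_le_one_of_one_le_of_nonpos (by exact_mod_cast hn)
        (neg_nonpos.2 (hα _))) _ (fun ω => Fintype.decidableExistsFintype)
end

section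
/- Let 0 ≤ s ≤ r and let α = (α_0,…,α_r) have all coordinates nonnegative with D_s(α) := ∑_{i=0}^{s} (C(s+1, i+1)/(s+1))·α_i > 1. For each n set p_i = n^{−α_i}. Then the P_r-probability that the random complex Y ∈ Y_r(n; n^{−α}) has dimension at least s (i.e. contains a face of cardinality s+1) tends to 0 as n → ∞; equivalently, dim Y < s asymptotically almost surely. -/
open Finset Filter

/-! ### Auxiliary material for the proof of Statement 17 -/

section Aux

open scoped Classical

/-- Sum over all Boolean assignments of a product of per-coordinate factors. -/
lemma sum_prod_bool {I : Type*} [Fintype I] [DecidableEq I] (h : I → Bool → ℝ) :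
    ∑ ω : I → Bool, ∏ σ, h σ (ω σ) = ∏ σ, (h σ true + h σ false) := by
  have := Finset.prod_univ_sum (fun _ : I => (univ : Finset Bool)) h
  rw [Fintype.piFinset_univ] at this
  rw [← this]
  exact Finset.prod_congr rfl fun σ _ => by simp [Fintype.sum_bool, add_comm]

/-- Summing the product weight over a "cylinder" of Boolean assignments. -/
lemma sum_fiber {I : Type*} [Fintype I] [DecidableEq I] (h : I → Bool → ℝ) (S : Finset I)
    (v : I → Bool) (h1 : ∀ σ, h σ true + h σ false = 1) :
    ∑ ω ∈ univ.filter (fun ω : I → Bool => ∀ σ ∈ S, ω σ = v σ), ∏ σ, h σ (ω σ)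
      = ∏ σ ∈ S, h σ (v σ) := by
  set h' : I → Bool → ℝ := fun σ b => if σ ∈ S ∧ b ≠ v σ then 0 else h σ b with hh'
  have key : ∑ ω ∈ univ.filter (fun ω : I → Bool => ∀ σ ∈ S, ω σ = v σ), ∏ σ, h σ (ω σ)
      = ∑ ω : I → Bool, ∏ σ, h' σ (ω σ) := by
    rw [← Finset.sum_filter_add_sum_filter_not univ (fun ω : I → Bool => ∀ σ ∈ S, ω σ = v σ)
      (fun ω => ∏ σ, h' σ (ω σ))]
    have e1 : ∑ ω ∈ univ.filter (fun ω : I → Bool => ¬ ∀ σ ∈ S, ω σ = v σ),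
        ∏ σ, h' σ (ω σ) = 0 := by
      apply Finset.sum_eq_zero
      intro ω hω
      simp only [mem_filter, mem_univ, true_and, not_forall] at hω
      obtain ⟨σ, hσS, hσv⟩ := hω
      exact Finset.prod_eq_zero (mem_univ σ) (by simp [hh', hσS, hσv])
    rw [e1, add_zero]
    apply Finset.sum_congr rfl
    intro ω hω
    simp only [mem_filter, mem_univ, true_and] at hω
    exact Finset.prod_congr rfl fun σ _ => by
      by_cases hσ : σ ∈ S
      · simp [hh', hω σ hσ]
      · simp [hh', hσ]
  rw [key, sum_prod_bool]
  have hsum : ∀ σ : I, h' σ true + h' σ false = if σ ∈ S then h σ (v σ) else 1 := by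
    intro σ
    by_cases hσ : σ ∈ S
    · cases hv : v σ <;> simp [hh', hσ, hv]
    · simp [hh', hσ, h1 σ]
  rw [Finset.prod_congr rfl fun σ _ => hsum σ, Finset.prod_ite_mem, univ_inter]

/-- A sum over a finite union is at most the sum of the sums, for nonnegative weights. -/
lemma my_sum_biUnion_le {ι κ : Type*} [DecidableEq κ] (s : Finset ι) (t : ι → Finset κ)
    (f : κ → ℝ) (hf : ∀ x, 0 ≤ f x) :
    ∑ x ∈ s.biUnion t, f x ≤ ∑ a ∈ s, ∑ x ∈ t a, f x := by
  induction s using Finset.induction_on with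
  | empty => simp
  | insert _ _ ha ih =>
    rename_i a s
    rw [Finset.biUnion_insert, Finset.sum_insert ha]
    calc ∑ x ∈ t a ∪ s.biUnion t, f x
        ≤ ∑ x ∈ t a, f x + ∑ x ∈ s.biUnion t, f x := by
          rw [← Finset.sum_union_inter]
          have : 0 ≤ ∑ x ∈ t a ∩ s.biUnion t, f x := Finset.sum_nonneg fun x _ => hf x
          linarith
      _ ≤ _ := by linarith [ih]

/-- The per-coordinate flip weight. -/
noncomputable def gw {n : ℕ} (r : ℕ) (p : ℕ → ℝ) (σ : Finset (Fin n)) (b : Bool) : ℝ :=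
  if σ.Nonempty ∧ σ.card ≤ r + 1 then (if b then p (σ.card - 1) else 1 - p (σ.card - 1))
  else 1/2

lemma gw_sum {n : ℕ} (r : ℕ) (p : ℕ → ℝ) (σ : Finset (Fin n)) :
    gw r p σ true + gw r p σ false = 1 := by
  by_cases h : σ.Nonempty ∧ σ.card ≤ r + 1 <;> simp [gw, h] <;> ring

lemma gw_nonneg {n : ℕ} (r : ℕ) (p : ℕ → ℝ) (hp0 : ∀ i, 0 ≤ p i) (hp1 : ∀ i, p i ≤ 1)
    (σ : Finset (Fin n)) (b : Bool) : 0 ≤ gw r p σ b := by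
  by_cases h : σ.Nonempty ∧ σ.card ≤ r + 1 <;> cases b <;>
    simp [gw, h, hp0 (σ.card - 1)] <;> linarith [hp1 (σ.card - 1)]

/-- The complex generated by a Boolean assignment of flips. -/
noncomputable def cl {n : ℕ} (r : ℕ) (ω : Finset (Fin n) → Bool) : Finset (Finset (Fin n)) :=
  univ.filter fun σ => σ.Nonempty ∧ σ.card ≤ r + 1 ∧ ∀ τ ⊆ σ, τ.Nonempty → ω τ = true

/-- The external faces of a complex (of any dimension up to `r`). -/
noncomputable def extF {n : ℕ} (r : ℕ) (Y : Finset (Finset (Fin n))) : Finset (Finset (Fin n)) :=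
  univ.filter fun σ => σ.Nonempty ∧ σ.card ≤ r + 1 ∧ σ ∉ Y ∧
    ∀ τ ⊆ σ, τ.card = σ.card - 1 → τ.Nonempty → τ ∈ Y

lemma cl_isComplex {n : ℕ} (r : ℕ) (ω : Finset (Fin n) → Bool) : IsComplex n r (cl r ω) := by
  constructor
  · intro σ hσ
    simp only [cl, mem_filter] at hσ
    exact ⟨hσ.2.1, hσ.2.2.1⟩
  · intro σ hσ τ hτσ hτ
    simp only [cl, mem_filter, mem_univ, true_and] at hσ ⊢
    exact ⟨hτ, le_trans (Finset.card_le_card hτσ) hσ.2.1,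
      fun ρ hρ hρne => hσ.2.2 ρ (hρ.trans hτσ) hρne⟩

lemma cl_eq_iff {n : ℕ} (r : ℕ) (ω : Finset (Fin n) → Bool) (Y : Finset (Finset (Fin n)))
    (hY : IsComplex n r Y) :
    cl r ω = Y ↔ ((∀ σ ∈ Y, ω σ = true) ∧ (∀ σ ∈ extF r Y, ω σ = false)) := by
  constructor
  · rintro rfl
    have hmem : ∀ σ ∈ cl r ω, ω σ = true := by
      intro σ hσ
      simp only [cl, mem_filter] at hσ
      exact hσ.2.2.2 σ (Finset.Subset.refl σ) hσ.2.1
    refine ⟨hmem, ?_⟩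
    intro σ hσ
    simp only [extF, mem_filter, mem_univ, true_and] at hσ
    obtain ⟨hne, hcard, hnotY, hsub⟩ := hσ
    by_contra hcon
    have hωσ : ω σ = true := by revert hcon; cases ω σ <;> simp
    apply hnotY
    simp only [cl, mem_filter, mem_univ, true_and]
    refine ⟨hne, hcard, ?_⟩
    intro τ hτσ hτne
    rcases eq_or_ne τ σ with rfl | hne'
    · exact hωσ
    · have hτlt : τ.card < σ.card :=
        Finset.card_lt_card (Finset.ssubset_iff_subset_ne.2 ⟨hτσ, hne'⟩)
      obtain ⟨ρ, hτρ, hρσ, hρcard⟩ := Finset.exists_subsuperset_card_eq hτσ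
        (by omega : τ.card ≤ σ.card - 1) (by omega)
      have hρY : ρ ∈ cl r ω := hsub ρ hρσ hρcard
        (Finset.card_pos.1 (by have := Finset.card_pos.2 hτne; omega))
      exact hmem τ (hY.2 ρ hρY τ hτρ hτne)
  · rintro ⟨h1, h2⟩
    apply Finset.Subset.antisymm
    · intro σ hσ
      by_contra hσY
      have hM : (σ.powerset.filter fun τ => τ.Nonempty ∧ τ ∉ Y).Nonempty := by
        refine ⟨σ, ?_⟩
        simp only [mem_filter, Finset.mem_powerset]
        simp only [cl, mem_filter] at hσ
        exact ⟨Finset.Subset.refl σ, hσ.2.1, hσY⟩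
      obtain ⟨τ, hτM, hτmin⟩ := Finset.exists_min_image _ Finset.card hM
      simp only [mem_filter, Finset.mem_powerset] at hτM
      obtain ⟨hτσ, hτne, hτY⟩ := hτM
      simp only [cl, mem_filter, mem_univ, true_and] at hσ
      have hτext : τ ∈ extF r Y := by
        simp only [extF, mem_filter, mem_univ, true_and]
        refine ⟨hτne, le_trans (Finset.card_le_card hτσ) hσ.2.1, hτY, ?_⟩
        intro ρ hρτ hρcard hρne
        by_contra hρY
        have := hτmin ρ (by
          simp only [mem_filter, Finset.mem_powerset]
          exact ⟨hρτ.trans hτσ, hρne, hρY⟩)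
        have h1 := Finset.card_pos.2 hτne
        omega
      have := h2 τ hτext
      rw [hσ.2.2 τ hτσ hτne] at this
      exact Bool.noConfusion this
    · intro σ hσ
      simp only [cl, mem_filter, mem_univ, true_and]
      obtain ⟨hne, hcard⟩ := hY.1 σ hσ
      exact ⟨hne, hcard, fun τ hτσ hτne => h1 τ (hY.2 σ hσ τ hτσ hτne)⟩

lemma weight_eq {n : ℕ} (r : ℕ) (p : ℕ → ℝ) (Y : Finset (Finset (Fin n)))
    (hY : IsComplex n r Y) :
    ∏ σ ∈ Y ∪ extF r Y, gw r p σ (decide (σ ∈ Y)) = weight n r p Y := by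
  have hdisj : Disjoint Y (extF r Y) := by
    rw [Finset.disjoint_left]
    intro σ hσ hσ'
    simp only [extF, mem_filter] at hσ'
    exact hσ'.2.2.2.1 hσ
  rw [Finset.prod_union hdisj]
  have e1 : ∏ σ ∈ Y, gw r p σ (decide (σ ∈ Y)) = ∏ i ∈ Finset.range (r+1), p i ^ fCount Y i := by
    have h1 : ∏ σ ∈ Y, gw r p σ (decide (σ ∈ Y)) = ∏ σ ∈ Y, p (σ.card - 1) := by
      apply Finset.prod_congr rfl
      intro σ hσ
      simp [gw, hY.1 σ hσ, hσ]
    rw [h1]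
    have h2 := Finset.prod_fiberwise_eq_prod_filter' Y (Finset.range (r+1))
      (fun σ => σ.card - 1) p
    have h3 : Y.filter (fun σ => σ.card - 1 ∈ Finset.range (r+1)) = Y := by
      apply Finset.filter_true_of_mem
      intro σ hσ
      have := (hY.1 σ hσ).2
      simp only [Finset.mem_range]
      omega
    rw [h3] at h2
    rw [show (∏ σ ∈ Y, p (σ.card - 1)) = ∏ σ ∈ Y, p ((fun σ => σ.card - 1) σ) from rfl, ← h2]
    apply Finset.prod_congr rfl
    intro i _
    rw [Finset.prod_const]
    congr 1
    unfold fCount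
    congr 1
    apply Finset.filter_congr
    intro σ hσ
    have := Finset.card_pos.2 (hY.1 σ hσ).1
    omega
  have e2 : ∏ σ ∈ extF r Y, gw r p σ (decide (σ ∈ Y))
      = ∏ i ∈ Finset.range (r+1), (1 - p i) ^ eCount Y i := by
    have h1 : ∏ σ ∈ extF r Y, gw r p σ (decide (σ ∈ Y))
        = ∏ σ ∈ extF r Y, (1 - p (σ.card - 1)) := by
      apply Finset.prod_congr rfl
      intro σ hσ
      simp only [extF, mem_filter, mem_univ, true_and] at hσ
      simp [gw, hσ.1, hσ.2.1, hσ.2.2.1]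
    rw [h1]
    have h2 := Finset.prod_fiberwise_eq_prod_filter' (extF r Y) (Finset.range (r+1))
      (fun σ => σ.card - 1) (fun i => 1 - p i)
    have h3 : (extF r Y).filter (fun σ => σ.card - 1 ∈ Finset.range (r+1)) = extF r Y := by
      apply Finset.filter_true_of_mem
      intro σ hσ
      simp only [extF, mem_filter, mem_univ, true_and] at hσ
      simp only [Finset.mem_range]
      omega
    rw [h3] at h2
    rw [show (∏ σ ∈ extF r Y, (1 - p (σ.card - 1)))
        = ∏ σ ∈ extF r Y, (fun i => 1 - p i) ((fun σ => σ.card - 1) σ) from rfl, ← h2]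
    apply Finset.prod_congr rfl
    intro i hi
    rw [Finset.prod_const]
    congr 1
    unfold eCount
    congr 1
    rw [extF, Finset.filter_filter]
    apply Finset.filter_congr
    intro σ _
    simp only [Finset.mem_range] at hi
    constructor
    · rintro ⟨⟨hne, hcard, hnY, hsub⟩, hci⟩
      have := Finset.card_pos.2 hne
      exact ⟨by omega, hnY, fun τ hτ hτc hτne => hsub τ hτ (by omega) hτne⟩
    · rintro ⟨hc, hnY, hsub⟩
      refine ⟨⟨Finset.card_pos.1 (by omega), by omega, hnY,
        fun τ hτ hτc hτne => hsub τ hτ (by omega) hτne⟩, by omega⟩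
  rw [e1, e2, weight, ← Finset.prod_mul_distrib]

lemma sum_pw_fiber {n : ℕ} (r : ℕ) (p : ℕ → ℝ) (Y : Finset (Finset (Fin n)))
    (hY : IsComplex n r Y) :
    ∑ ω ∈ univ.filter (fun ω : Finset (Fin n) → Bool => cl r ω = Y), ∏ σ, gw r p σ (ω σ)
      = weight n r p Y := by
  have hfilter : univ.filter (fun ω : Finset (Fin n) → Bool => cl r ω = Y)
      = univ.filter (fun ω : Finset (Fin n) → Bool =>
          ∀ σ ∈ Y ∪ extF r Y, ω σ = decide (σ ∈ Y)) := by
    apply Finset.filter_congr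
    intro ω _
    rw [cl_eq_iff r ω Y hY]
    constructor
    · rintro ⟨h1, h2⟩ σ hσ
      rcases Finset.mem_union.1 hσ with h | h
      · simp [h1 σ h, h]
      · have hnY : σ ∉ Y := by simp only [extF, mem_filter] at h; exact h.2.2.2.1
        simp [h2 σ h, hnY]
    · intro h
      constructor
      · intro σ hσ
        have := h σ (Finset.mem_union_left _ hσ)
        simpa [hσ] using this
      · intro σ hσ
        have hnY : σ ∉ Y := by simp only [extF, mem_filter] at hσ; exact hσ.2.2.2.1
        have := h σ (Finset.mem_union_right _ hσ)
        simpa [hnY] using this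
  rw [hfilter, sum_fiber _ _ _ (gw_sum r p), weight_eq r p Y hY]

lemma sum_pw_A {n : ℕ} (r s : ℕ) (hs : s ≤ r) (p : ℕ → ℝ) (σ0 : Finset (Fin n))
    (hσ0 : σ0.card = s + 1) :
    ∑ ω ∈ univ.filter (fun ω : Finset (Fin n) → Bool =>
        ∀ τ ∈ σ0.powerset.filter Finset.Nonempty, ω τ = true), ∏ σ, gw r p σ (ω σ)
      = ∏ i ∈ Finset.range (s+1), p i ^ ((s+1).choose (i+1)) := by
  rw [sum_fiber _ _ _ (gw_sum r p)]
  have h1 : ∏ τ ∈ σ0.powerset.filter Finset.Nonempty, gw r p τ true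
      = ∏ τ ∈ σ0.powerset.filter Finset.Nonempty, p (τ.card - 1) := by
    apply Finset.prod_congr rfl
    intro τ hτ
    simp only [mem_filter, Finset.mem_powerset] at hτ
    have hcard : τ.card ≤ r + 1 := le_trans (Finset.card_le_card hτ.1) (by omega)
    simp [gw, hτ.2, hcard]
  rw [h1]
  have h2 := Finset.prod_fiberwise_eq_prod_filter' (σ0.powerset.filter Finset.Nonempty)
    (Finset.range (s+1)) (fun τ => τ.card - 1) p
  have h3 : (σ0.powerset.filter Finset.Nonempty).filter
      (fun τ => τ.card - 1 ∈ Finset.range (s+1)) = σ0.powerset.filter Finset.Nonempty := by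
    apply Finset.filter_true_of_mem
    intro τ hτ
    simp only [mem_filter, Finset.mem_powerset] at hτ
    have := Finset.card_le_card hτ.1
    simp only [Finset.mem_range]
    omega
  rw [h3] at h2
  rw [show (∏ τ ∈ σ0.powerset.filter Finset.Nonempty, p (τ.card - 1))
      = ∏ τ ∈ σ0.powerset.filter Finset.Nonempty, p ((fun τ => τ.card - 1) τ) from rfl, ← h2]
  apply Finset.prod_congr rfl
  intro i _
  rw [Finset.prod_const]
  congr 1
  have hpc : (σ0.powerset.filter Finset.Nonempty).filter (fun τ => τ.card - 1 = i)
      = Finset.powersetCard (i+1) σ0 := by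
    rw [Finset.powersetCard_eq_filter, Finset.filter_filter]
    apply Finset.filter_congr
    intro τ _
    constructor
    · rintro ⟨hne, hci⟩
      have := Finset.card_pos.2 hne
      omega
    · intro hci
      exact ⟨Finset.card_pos.1 (by omega), by omega⟩
  rw [hpc, Finset.card_powersetCard, hσ0]

lemma main_bound (n r s : ℕ) (hs : s ≤ r) (p : ℕ → ℝ) (hp0 : ∀ i, 0 ≤ p i)
    (hp1 : ∀ i, p i ≤ 1) :
    ∑ Y ∈ (complexes n r).filter (fun Y => ∃ σ ∈ Y, σ.card = s + 1), weight n r p Y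
      ≤ (n.choose (s+1) : ℝ) * ∏ i ∈ Finset.range (s+1), p i ^ ((s+1).choose (i+1)) := by
  have pw_nonneg : ∀ ω : Finset (Fin n) → Bool, 0 ≤ ∏ σ, gw r p σ (ω σ) :=
    fun ω => Finset.prod_nonneg fun σ _ => gw_nonneg r p hp0 hp1 σ (ω σ)
  have step1 : ∑ Y ∈ (complexes n r).filter (fun Y => ∃ σ ∈ Y, σ.card = s + 1), weight n r p Y
      = ∑ ω ∈ univ.filter (fun ω : Finset (Fin n) → Bool => ∃ σ ∈ cl r ω, σ.card = s + 1),
          ∏ σ, gw r p σ (ω σ) := by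
    have key := Finset.sum_fiberwise_eq_sum_filter (univ : Finset (Finset (Fin n) → Bool))
      ((complexes n r).filter (fun Y => ∃ σ ∈ Y, σ.card = s + 1)) (cl r)
      (fun ω => ∏ σ, gw r p σ (ω σ))
    calc ∑ Y ∈ (complexes n r).filter (fun Y => ∃ σ ∈ Y, σ.card = s + 1), weight n r p Y
        = ∑ Y ∈ (complexes n r).filter (fun Y => ∃ σ ∈ Y, σ.card = s + 1),
            ∑ ω ∈ univ.filter (fun ω : Finset (Fin n) → Bool => cl r ω = Y),
              ∏ σ, gw r p σ (ω σ) := by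
          apply Finset.sum_congr rfl
          intro Y hY
          have : IsComplex n r Y := by
            simp only [Finset.mem_filter, complexes] at hY
            exact hY.1.2
          exact (sum_pw_fiber r p Y this).symm
      _ = ∑ ω ∈ univ.filter (fun ω : Finset (Fin n) → Bool =>
            cl r ω ∈ (complexes n r).filter (fun Y => ∃ σ ∈ Y, σ.card = s + 1)),
              ∏ σ, gw r p σ (ω σ) := key
      _ = _ := by
          congr 1
          apply Finset.filter_congr
          intro ω _
          simp only [Finset.mem_filter, complexes, Finset.mem_univ, true_and]
          constructor
          · rintro ⟨_, h⟩; exact h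
          · intro h; exact ⟨cl_isComplex r ω, h⟩
  rw [step1]
  have step2 : ∑ ω ∈ univ.filter (fun ω : Finset (Fin n) → Bool =>
        ∃ σ ∈ cl r ω, σ.card = s + 1), ∏ σ, gw r p σ (ω σ)
      ≤ ∑ σ0 ∈ univ.filter (fun σ0 : Finset (Fin n) => σ0.card = s + 1),
          ∑ ω ∈ univ.filter (fun ω : Finset (Fin n) → Bool =>
            ∀ τ ∈ σ0.powerset.filter Finset.Nonempty, ω τ = true), ∏ σ, gw r p σ (ω σ) := by
    refine le_trans (Finset.sum_le_sum_of_subset_of_nonneg ?_ (fun ω _ _ => pw_nonneg ω))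
      (my_sum_biUnion_le _ _ _ pw_nonneg)
    intro ω hω
    simp only [mem_filter, mem_univ, true_and] at hω
    obtain ⟨σ, hσ, hcard⟩ := hω
    rw [Finset.mem_biUnion]
    refine ⟨σ, by simp [hcard], ?_⟩
    simp only [mem_filter, mem_univ, true_and]
    intro τ hτ
    simp only [mem_filter, Finset.mem_powerset] at hτ
    simp only [cl, mem_filter, mem_univ, true_and] at hσ
    exact hσ.2.2 τ hτ.1 hτ.2
  refine le_trans step2 ?_
  have step3 : ∑ σ0 ∈ univ.filter (fun σ0 : Finset (Fin n) => σ0.card = s + 1),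
      ∑ ω ∈ univ.filter (fun ω : Finset (Fin n) → Bool =>
        ∀ τ ∈ σ0.powerset.filter Finset.Nonempty, ω τ = true), ∏ σ, gw r p σ (ω σ)
      = ∑ σ0 ∈ univ.filter (fun σ0 : Finset (Fin n) => σ0.card = s + 1),
          ∏ i ∈ Finset.range (s+1), p i ^ ((s+1).choose (i+1)) := by
    apply Finset.sum_congr rfl
    intro σ0 hσ0
    simp only [mem_filter, mem_univ, true_and] at hσ0
    exact sum_pw_A r s hs p σ0 hσ0
  rw [step3, Finset.sum_const, nsmul_eq_mul]
  have hcard : (univ.filter (fun σ0 : Finset (Fin n) => σ0.card = s + 1)).card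
      = n.choose (s+1) := by
    rw [← Finset.powerset_univ, ← Finset.powersetCard_eq_filter, Finset.card_powersetCard,
      Finset.card_univ, Fintype.card_fin]
  rw [hcard]

end Aux

open scoped Classical in
/-- if `D_s(α) > 1` then a.a.s. the random complex `Y ∈ Y_r(n; n^{-α})`
has dimension less than `s`. -/
theorem stmt17 (r s : ℕ) (hs : s ≤ r) (α : ℕ → ℝ) (hα : ∀ i, 0 ≤ α i)
    (hD : 1 < ∑ i ∈ Finset.range (s + 1),
        ((s + 1).choose (i + 1) : ℝ) / (s + 1) * α i) :
    Tendsto (fun n : ℕ =>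
      ∑ Y ∈ (complexes n r).filter (fun Y => ∃ σ ∈ Y, σ.card = s + 1),
        weight n r (fun i => (n : ℝ) ^ (-α i)) Y)
      atTop (nhds 0) := by
  classical
  set c : ℝ := ∑ i ∈ Finset.range (s+1), ((s+1).choose (i+1) : ℝ) * α i with hc
  have hceq : c = ((s : ℝ) + 1) * ∑ i ∈ Finset.range (s+1),
      ((s+1).choose (i+1) : ℝ) / (s+1) * α i := by
    rw [Finset.mul_sum, hc]
    apply Finset.sum_congr rfl
    intro i _
    have hne : ((s : ℝ) + 1) ≠ 0 := by positivity
    push_cast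
    field_simp
  have hsc : (s : ℝ) + 1 < c := by
    rw [hceq]
    have hpos : (0:ℝ) < (s : ℝ) + 1 := by positivity
    nlinarith [hD]
  have hg : Tendsto (fun n : ℕ => (n:ℝ) ^ (((s : ℝ) + 1) - c)) atTop (nhds 0) := by
    have heq : ((s : ℝ) + 1) - c = -(c - ((s:ℝ) + 1)) := by ring
    rw [heq]
    exact (tendsto_rpow_neg_atTop (by linarith)).comp tendsto_natCast_atTop_atTop
  refine tendsto_of_tendsto_of_tendsto_of_le_of_le' tendsto_const_nhds hg ?_ ?_
  · filter_upwards [eventually_ge_atTop 1] with n hn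
    have hn1 : (1:ℝ) ≤ (n:ℝ) := by exact_mod_cast hn
    apply Finset.sum_nonneg
    intro Y hY
    apply Finset.prod_nonneg
    intro i _
    have hp1 : (n:ℝ) ^ (-α i) ≤ 1 :=
      Real.rpow_le_one_of_one_le_of_nonpos hn1 (by linarith [hα i])
    exact mul_nonneg (pow_nonneg (Real.rpow_nonneg (Nat.cast_nonneg n) _) _)
      (pow_nonneg (by linarith) _)
  · filter_upwards [eventually_ge_atTop 1] with n hn
    have hn1 : (1:ℝ) ≤ (n:ℝ) := by exact_mod_cast hn
    have hn0 : (0:ℝ) < (n:ℝ) := by linarith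
    have hp0 : ∀ i, 0 ≤ (n:ℝ) ^ (-α i) := fun i => Real.rpow_nonneg (le_of_lt hn0) _
    have hp1 : ∀ i, (n:ℝ) ^ (-α i) ≤ 1 := fun i =>
      Real.rpow_le_one_of_one_le_of_nonpos hn1 (by linarith [hα i])
    have hprod : ∏ i ∈ Finset.range (s+1), ((n:ℝ) ^ (-α i)) ^ ((s+1).choose (i+1))
        = (n:ℝ) ^ (-c) := by
      have hnegc : -c = ∑ i ∈ Finset.range (s+1), (-α i * ((s+1).choose (i+1) : ℝ)) := by
        rw [hc, ← Finset.sum_neg_distrib]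
        apply Finset.sum_congr rfl
        intro i _
        ring
      rw [hnegc, Real.rpow_sum_of_pos hn0]
      apply Finset.prod_congr rfl
      intro i _
      rw [Real.rpow_mul (le_of_lt hn0), Real.rpow_natCast]
    calc ∑ Y ∈ (complexes n r).filter (fun Y => ∃ σ ∈ Y, σ.card = s + 1),
          weight n r (fun i => (n : ℝ) ^ (-α i)) Y
        ≤ (n.choose (s+1) : ℝ) * ∏ i ∈ Finset.range (s+1),
            ((n:ℝ) ^ (-α i)) ^ ((s+1).choose (i+1)) :=
          main_bound n r s hs _ hp0 hp1
      _ ≤ (n:ℝ) ^ (s+1 : ℕ) * (n:ℝ) ^ (-c) := by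
          rw [hprod]
          apply mul_le_mul_of_nonneg_right _ (Real.rpow_nonneg (le_of_lt hn0) _)
          exact_mod_cast Nat.choose_le_pow n (s+1)
      _ = (n:ℝ) ^ (((s : ℝ) + 1) - c) := by
          rw [← Real.rpow_natCast (n:ℝ) (s+1), ← Real.rpow_add hn0]
          push_cast
          ring_nf
end
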